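/- If two parametrizations (α, β, f) and (α', β, f') with the same slope β ≠ 0 induce the same case density f₁ and the same control density f₀, and additionally f = f', then α = α' (given the support of f contains points where βᵀx takes at least two values, or even one value suffices by strict monotonicity of φ and the normalization). -/

import Mathlib

open Real Matrix MeasureTheory

/-! Evaluating the density identity at a point with `β ⬝ᵥ x = t` and cancelling `f x` gives
`φ(α + t) = k φ(α' + t)` for every `t`, with `k = cα / cα'`. Since `1 / φ(s) = 1 + e⁻ˢ`, this is the
affine identity `1 + e^{-α} u = k⁻¹ (1 + e^{-α'} u)` in `u = e⁻ᵗ > 0`; comparing coefficients gives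
`k = 1` and `e^{-α} = e^{-α'}`. -/

noncomputable def phi (t : ℝ) : ℝ := Real.exp t / (1 + Real.exp t)

theorem Matrix.exists_dotProduct_eq {K ι : Type*} [Field K] [Fintype ι] {v : ι → K} (hv : v ≠ 0)
    (t : K) : ∃ x, v ⬝ᵥ x = t := by
  classical
  obtain ⟨i, hi⟩ := Function.ne_iff.mp hv
  exact ⟨Pi.single i (t / v i), by rw [dotProduct_single, mul_div_cancel₀ _ hi]⟩

theorem inv_phi (s : ℝ) : (phi s)⁻¹ = 1 + exp (-s) := by
  rw [phi, inv_div, exp_neg]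
  field_simp
  ring

theorem eq_of_forall_phi_add_eq_mul {a b k : ℝ} (h : ∀ t, phi (a + t) = k * phi (b + t)) :
    a = b := by
  have haffine : ∀ t, 1 + exp (-a) * exp (-t) = k⁻¹ * (1 + exp (-b) * exp (-t)) := fun t => by
    simpa only [mul_inv, inv_phi, neg_add, exp_add] using congrArg Inv.inv (h t)
  have h0 := haffine 0
  have h1 := haffine (-1)
  rw [neg_zero, exp_zero] at h0
  rw [neg_neg] at h1
  have hslope : exp (-a) = k⁻¹ * exp (-b) := by
    have he : exp 1 - 1 ≠ 0 := (sub_pos.mpr (one_lt_exp_iff.mpr one_pos)).ne'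
    apply mul_right_cancel₀ he
    linear_combination h1 - h0
  have hk : k⁻¹ = 1 := by linear_combination -h0 + hslope
  rw [hk, one_mul, exp_eq_exp, neg_inj] at hslope
  exact hslope

theorem intercept_identifiable_same_density_general {d : ℕ}
    (α α' : ℝ) (β : Fin d → ℝ) (hβ : β ≠ 0)
    (f : (Fin d → ℝ) → ℝ) (hf_pos : ∀ x, 0 < f x)
    (cα cα' : ℝ)
    (hcα01 : 0 < cα ∧ cα < 1)
    (heq : ∀ x, phi (α + β ⬝ᵥ x) * f x / cα = phi (α' + β ⬝ᵥ x) * f x / cα') :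
    α = α' := by
  refine eq_of_forall_phi_add_eq_mul (k := cα / cα') fun t => ?_
  obtain ⟨x, rfl⟩ := exists_dotProduct_eq hβ t
  have hfx := (hf_pos x).ne'
  have hcα0 := hcα01.1.ne'
  calc phi (α + β ⬝ᵥ x) = phi (α + β ⬝ᵥ x) * f x / cα * (cα / f x) := by field_simp
    _ = phi (α' + β ⬝ᵥ x) * f x / cα' * (cα / f x) := by rw [heq x]
    _ = cα / cα' * phi (α' + β ⬝ᵥ x) := by field_simp

/-- If two parametrizations with the same slope β ≠ 0 and the same covariate
density f induce the same case density (hence the same control density), then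
the intercepts coincide. -/
theorem intercept_identifiable_same_density {d : ℕ}
    (α α' : ℝ) (β : Fin d → ℝ) (hβ : β ≠ 0)
    (f : (Fin d → ℝ) → ℝ) (hf_pos : ∀ x, 0 < f x)
    (cα cα' : ℝ)
    (hcα : cα = ∫ x, phi (α + β ⬝ᵥ x) * f x)
    (hcα' : cα' = ∫ x, phi (α' + β ⬝ᵥ x) * f x)
    (hcα01 : 0 < cα ∧ cα < 1) (hcα'01 : 0 < cα' ∧ cα' < 1)
    (heq : ∀ x, phi (α + β ⬝ᵥ x) * f x / cα = phi (α' + β ⬝ᵥ x) * f x / cα') :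
    α = α' :=
  intercept_identifiable_same_density_general α α' β hβ f hf_pos cα cα' hcα01 heq
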